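/- In the syntactic pomset automaton, if e ⪯_Σ f† ⪯_Σ e for spr-expressions e, f, then e ≃ f†. -/

import Mathlib

open Classical

noncomputable section

/-- Series-parallel rational expressions. -/
inductive SPR (A : Type) : Type where
  | zero : SPR A
  | one : SPR A
  | var (a : A) : SPR A
  | add (e f : SPR A) : SPR A
  | seq (e f : SPR A) : SPR A
  | par (e f : SPR A) : SPR A
  | star (e : SPR A) : SPR A
  | dagger (e : SPR A) : SPR A

/-- The set ℱ of expressions accepting the empty pomset. -/
inductive Null {A : Type} : SPR A → Prop where
  | one : Null SPR.one
  | addL {e : SPR A} (f : SPR A) : Null e → Null (SPR.add e f)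
  | addR {e : SPR A} (f : SPR A) : Null e → Null (SPR.add f e)
  | seq {e f : SPR A} : Null e → Null f → Null (SPR.seq e f)
  | par {e f : SPR A} : Null e → Null f → Null (SPR.par e f)
  | star (e : SPR A) : Null (SPR.star e)
  | dagger (e : SPR A) : Null (SPR.dagger e)

/-- The syntactic congruence ≃: ACI of + and left-distributivity of + over ·. -/
inductive cong {A : Type} : SPR A → SPR A → Prop where
  | add_zero (e : SPR A) : cong (SPR.add e SPR.zero) e
  | add_idem (e : SPR A) : cong (SPR.add e e) e
  | add_comm (e f : SPR A) : cong (SPR.add e f) (SPR.add f e)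
  | add_assoc (e f g : SPR A) : cong (SPR.add e (SPR.add f g)) (SPR.add (SPR.add e f) g)
  | distrib (e f g : SPR A) :
      cong (SPR.seq (SPR.add e f) g) (SPR.add (SPR.seq e g) (SPR.seq f g))
  | refl (e : SPR A) : cong e e
  | symm {e f : SPR A} : cong e f → cong f e
  | trans {e f g : SPR A} : cong e f → cong f g → cong e g
  | add_congr {e e' f f' : SPR A} :
      cong e e' → cong f f' → cong (SPR.add e f) (SPR.add e' f')
  | seq_congr {e e' f f' : SPR A} :
      cong e e' → cong f f' → cong (SPR.seq e f) (SPR.seq e' f')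
  | par_congr {e e' f f' : SPR A} :
      cong e e' → cong f f' → cong (SPR.par e f) (SPR.par e' f')
  | star_congr {e e' : SPR A} : cong e e' → cong (SPR.star e) (SPR.star e')
  | dagger_congr {e e' : SPR A} : cong e e' → cong (SPR.dagger e) (SPR.dagger e')

/-- `e ⋆ f`: `f` if `e` is nullable, `0` otherwise. -/
def estar {A : Type} (e f : SPR A) : SPR A := if Null e then f else SPR.zero

/-- `e ⨟ f`: `0` if `e ≃ 0`, `e · f` otherwise. -/
def eseq {A : Type} (e f : SPR A) : SPR A :=
  if cong e SPR.zero then SPR.zero else SPR.seq e f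

/-- The Brzozowski-style sequential derivative δ_Σ. -/
def dseq {A : Type} : SPR A → A → SPR A
  | SPR.zero, _ => SPR.zero
  | SPR.one, _ => SPR.zero
  | SPR.var b, a => if a = b then SPR.one else SPR.zero
  | SPR.add e f, a => SPR.add (dseq e a) (dseq f a)
  | SPR.seq e f, a => SPR.add (eseq (dseq e a) f) (estar e (dseq f a))
  | SPR.par _ _, _ => SPR.zero
  | SPR.star e, a => eseq (dseq e a) (SPR.star e)
  | SPR.dagger _, _ => SPR.zero

/-- The Brzozowski-style parallel derivative γ_Σ. -/
def dgam {A : Type} : SPR A → SPR A → SPR A → SPR A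
  | SPR.zero, _, _ => SPR.zero
  | SPR.one, _, _ => SPR.zero
  | SPR.var _, _, _ => SPR.zero
  | SPR.add e f, g, h => SPR.add (dgam e g h) (dgam f g h)
  | SPR.seq e f, g, h => SPR.add (eseq (dgam e g h) f) (estar e (dgam f g h))
  | SPR.par e f, g, h => if cong g e ∧ cong h f then SPR.one else SPR.zero
  | SPR.star e, g, h => eseq (dgam e g h) (SPR.star e)
  | SPR.dagger e, g, h =>
      if cong g e ∧ cong h (SPR.dagger e) then SPR.one else SPR.zero

/-- The trace dependency preorder ⪯_Σ of the syntactic pomset automaton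
(on raw expressions, compatible with the congruence ≃). -/
inductive dleq {A : Type} : SPR A → SPR A → Prop where
  | refl (e : SPR A) : dleq e e
  | trans {e f g : SPR A} : dleq e f → dleq f g → dleq e g
  | congr {e f : SPR A} : cong e f → dleq e f
  | delta (e : SPR A) (a : A) : dleq (dseq e a) e
  | gamma (e g h : SPR A) : dleq (dgam e g h) e
  | forkL {e g h : SPR A} : ¬ cong (dgam e g h) SPR.zero → dleq g e
  | forkR {e g h : SPR A} : ¬ cong (dgam e g h) SPR.zero → dleq h e

/-- Maximal nesting of parallel composition in an expression. -/
def dpar {A : Type} : SPR A → ℕ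
  | SPR.zero => 0
  | SPR.one => 0
  | SPR.var _ => 0
  | SPR.add e f => max (dpar e) (dpar f)
  | SPR.seq e f => max (dpar e) (dpar f)
  | SPR.par e f => max (dpar e) (dpar f) + 1
  | SPR.star e => dpar e
  | SPR.dagger e => dpar e

/-- Maximal nesting of the parallel star in an expression. -/
def ddag {A : Type} : SPR A → ℕ
  | SPR.zero => 0
  | SPR.one => 0
  | SPR.var _ => 0
  | SPR.add e f => max (ddag e) (ddag f)
  | SPR.seq e f => max (ddag e) (ddag f)
  | SPR.par e f => max (ddag e) (ddag f)
  | SPR.star e => ddag e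
  | SPR.dagger e => ddag e + 1

/-!
The †-depth `ddag` never increases along `⪯_Σ`. Call `x` *low* if `x ≃ f†` or
`ddag x ≤ ddag f`. Lowness propagates downwards along `⪯_Σ`: derivatives are
compatible with `≃`, the derivatives of `f†` are `0` or `1`, and the only fork of `f†`
is into `f` and `f†`. Hence `e ⪯_Σ f†` makes `e` low, while `f† ⪯_Σ e` forces
`ddag f < ddag e`, so `e ≃ f†`.
-/

section DaggerLoops

variable {A : Type}

theorem cong.of_eq {e f : SPR A} (h : e = f) : cong e f := h ▸ .refl e

def nullB : SPR A → Bool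
  | .zero => false
  | .one => true
  | .var _ => false
  | .add e f => nullB e || nullB f
  | .seq e f => nullB e && nullB f
  | .par e f => nullB e && nullB f
  | .star _ => true
  | .dagger _ => true

theorem null_iff_nullB (e : SPR A) : Null e ↔ nullB e = true := by
  refine ⟨fun h => by induction h <;> simp [nullB, *], fun h => ?_⟩
  induction e with
  | zero | var _ => simp [nullB] at h
  | one => exact .one
  | add e f ihe ihf =>
      rcases Bool.or_eq_true_iff.mp h with h | h
      · exact .addL _ (ihe h)
      · exact .addR _ (ihf h)
  | seq e f ihe ihf =>
      obtain ⟨he, hf⟩ := Bool.and_eq_true_iff.mp h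
      exact .seq (ihe he) (ihf hf)
  | par e f ihe ihf =>
      obtain ⟨he, hf⟩ := Bool.and_eq_true_iff.mp h
      exact .par (ihe he) (ihf hf)
  | star e _ => exact .star e
  | dagger e _ => exact .dagger e

theorem null_add_iff (e f : SPR A) : Null (.add e f) ↔ Null e ∨ Null f := by
  simp [null_iff_nullB, nullB]

theorem cong.null_iff {e f : SPR A} (h : cong e f) : Null e ↔ Null f := by
  rw [null_iff_nullB, null_iff_nullB]
  induction h with
  | distrib => simp only [nullB]; cases nullB ‹SPR A› <;> simp
  | refl => rfl
  | symm _ ih => exact ih.symm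
  | trans _ _ ih₁ ih₂ => exact ih₁.trans ih₂
  | _ => simp [nullB, or_comm, or_assoc, *]

def zeroB : SPR A → Bool
  | .zero => true
  | .add e f => zeroB e && zeroB f
  | _ => false

theorem cong.zeroB_eq {e f : SPR A} (h : cong e f) : zeroB e = zeroB f := by
  induction h with
  | refl => rfl
  | symm _ ih => exact ih.symm
  | trans _ _ ih₁ ih₂ => exact ih₁.trans ih₂
  | _ => simp [zeroB, Bool.and_comm, Bool.and_left_comm, *]

theorem cong_zero_iff_zeroB (e : SPR A) : cong e .zero ↔ zeroB e = true := by
  refine ⟨fun h => h.zeroB_eq, fun h => ?_⟩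
  induction e with
  | zero => exact .refl _
  | add e f ihe ihf =>
      obtain ⟨he, hf⟩ := Bool.and_eq_true_iff.mp h
      exact (cong.add_congr (ihe he) (ihf hf)).trans (.add_zero _)
  | _ => simp [zeroB] at h

theorem add_cong_zero_iff {e f : SPR A} :
    cong (.add e f) .zero ↔ cong e .zero ∧ cong f .zero := by
  simp [cong_zero_iff_zeroB, zeroB]

theorem zero_add_cong (e : SPR A) : cong (.add .zero e) e :=
  (cong.add_comm _ _).trans (.add_zero e)

theorem add_add_add_comm_cong (a b c d : SPR A) :
    cong (.add (.add a b) (.add c d)) (.add (.add a c) (.add b d)) :=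
  (cong.add_assoc a b _).symm.trans <|
    (cong.add_congr (.refl a) <| (cong.add_assoc b c d).trans <|
      (cong.add_congr (.add_comm b c) (.refl d)).trans (cong.add_assoc c b d).symm).trans
    (cong.add_assoc a c _)

theorem eseq_congr {e e' f f' : SPR A} (he : cong e e') (hf : cong f f') :
    cong (eseq e f) (eseq e' f') := by
  by_cases h : cong e .zero
  · simpa [eseq, h, he.symm.trans h] using cong.refl _
  · have h' : ¬ cong e' .zero := fun c => h (he.trans c)
    simpa [eseq, h, h'] using cong.seq_congr he hf

theorem estar_congr {e e' f f' : SPR A} (he : Null e ↔ Null e') (hf : cong f f') :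
    cong (estar e f) (estar e' f') := by
  by_cases h : Null e
  · simpa [estar, h, he.mp h] using hf
  · simpa [estar, h, he.not.mp h] using cong.refl _

theorem eseq_cong_zero {e : SPR A} (h : cong e .zero) (f : SPR A) : cong (eseq e f) .zero := by
  simpa [eseq, h] using cong.refl _

theorem estar_cong_zero (e : SPR A) {f : SPR A} (h : cong f .zero) : cong (estar e f) .zero := by
  unfold estar; split
  · exact h
  · exact .refl _

theorem eseq_add (e f g : SPR A) :
    cong (eseq (.add e f) g) (.add (eseq e g) (eseq f g)) := by
  by_cases he : cong e .zero <;> by_cases hf : cong f .zero <;>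
    simp only [eseq, he, hf, add_cong_zero_iff, and_self, and_false, false_and, if_true,
      if_false]
  · exact (cong.add_zero _).symm
  · exact (cong.seq_congr ((cong.add_congr he (.refl f)).trans (zero_add_cong f)) (.refl g)).trans
      (zero_add_cong _).symm
  · exact (cong.seq_congr ((cong.add_congr (.refl e) hf).trans (.add_zero e)) (.refl g)).trans
      (cong.add_zero _).symm
  · exact .distrib e f g

theorem estar_add (e f g : SPR A) :
    cong (estar (.add e f) g) (.add (estar e g) (estar f g)) := by
  by_cases he : Null e <;> by_cases hf : Null f <;> simp only [estar, he, hf, null_add_iff,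
    or_self, or_false, false_or, if_true, if_false]
  · exact (cong.add_idem g).symm
  · exact (cong.add_zero g).symm
  · exact (zero_add_cong g).symm
  · exact (cong.add_zero _).symm

structure IsDerivative (D : SPR A → SPR A) : Prop where
  zero : D .zero = .zero
  add (e f : SPR A) : D (.add e f) = .add (D e) (D f)
  seq (e f : SPR A) : D (.seq e f) = .add (eseq (D e) f) (estar e (D f))
  star (e : SPR A) : D (.star e) = eseq (D e) (.star e)
  par_congr {e e' f f' : SPR A} : cong e e' → cong f f' → cong (D (.par e f)) (D (.par e' f'))
  dagger_congr {e e' : SPR A} : cong e e' → cong (D (.dagger e)) (D (.dagger e'))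

theorem IsDerivative.congr {D : SPR A → SPR A} (hD : IsDerivative D) {e e' : SPR A}
    (h : cong e e') : cong (D e) (D e') := by
  induction h with
  | add_zero e => simpa [hD.add, hD.zero] using cong.add_zero (D e)
  | add_idem e => simpa [hD.add] using cong.add_idem (D e)
  | add_comm e f => simpa [hD.add] using cong.add_comm (D e) (D f)
  | add_assoc e f g => simpa [hD.add] using cong.add_assoc (D e) (D f) (D g)
  | distrib e f g =>
      simp only [hD.add, hD.seq]
      exact (cong.add_congr (eseq_add _ _ _) (estar_add _ _ _)).trans
        (add_add_add_comm_cong _ _ _ _).symm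
  | refl => exact .refl _
  | symm _ ih => exact ih.symm
  | trans _ _ ih₁ ih₂ => exact ih₁.trans ih₂
  | add_congr _ _ ih₁ ih₂ => simpa [hD.add] using cong.add_congr ih₁ ih₂
  | seq_congr h₁ h₂ ih₁ ih₂ =>
      simpa [hD.seq] using cong.add_congr (eseq_congr ih₁ h₂) (estar_congr h₁.null_iff ih₂)
  | par_congr h₁ h₂ => exact hD.par_congr h₁ h₂
  | star_congr h₁ ih => simpa [hD.star] using eseq_congr ih (cong.star_congr h₁)
  | dagger_congr h₁ => exact hD.dagger_congr h₁

theorem isDerivative_dseq (a : A) : IsDerivative (dseq · a) where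
  zero := rfl
  add _ _ := rfl
  seq _ _ := rfl
  star _ := rfl
  par_congr _ _ := .refl _
  dagger_congr _ := .refl _

theorem isDerivative_dgam (g h : SPR A) : IsDerivative (dgam · g h) where
  zero := rfl
  add _ _ := rfl
  seq _ _ := rfl
  star _ := rfl
  par_congr h₁ h₂ := .of_eq <| by
    simp only [dgam]
    exact if_congr (and_congr ⟨(·.trans h₁), (·.trans h₁.symm)⟩
      ⟨(·.trans h₂), (·.trans h₂.symm)⟩) rfl rfl
  dagger_congr h₁ := .of_eq <| by
    simp only [dgam]
    exact if_congr (and_congr ⟨(·.trans h₁), (·.trans h₁.symm)⟩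
      ⟨(·.trans (.dagger_congr h₁)), (·.trans (.dagger_congr h₁.symm))⟩) rfl rfl

theorem cong.ddag_eq {e f : SPR A} (h : cong e f) : ddag e = ddag f := by
  induction h <;> simp [ddag, max_comm, max_left_comm, *]

theorem ddag_eseq_le (e f : SPR A) : ddag (eseq e f) ≤ max (ddag e) (ddag f) := by
  unfold eseq; split <;> simp [ddag]

theorem ddag_estar_le (e f : SPR A) : ddag (estar e f) ≤ ddag f := by
  unfold estar; split <;> simp [ddag]

theorem ddag_dseq_le (e : SPR A) (a : A) : ddag (dseq e a) ≤ ddag e := by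
  induction e with
  | var b => unfold dseq; split <;> simp [ddag]
  | add e f ihe ihf => simp [dseq, ddag]; omega
  | seq e f ihe ihf =>
      have := ddag_eseq_le (dseq e a) f
      have := ddag_estar_le e (dseq f a)
      simp [dseq, ddag] at *; omega
  | star e ihe =>
      have := ddag_eseq_le (dseq e a) (.star e)
      simp [dseq, ddag] at *; omega
  | _ => simp [dseq, ddag]

theorem ddag_dgam_le (e g h : SPR A) : ddag (dgam e g h) ≤ ddag e := by
  induction e with
  | add e f ihe ihf => simp [dgam, ddag]; omega
  | seq e f ihe ihf =>
      have := ddag_eseq_le (dgam e g h) f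
      have := ddag_estar_le e (dgam f g h)
      simp [dgam, ddag] at *; omega
  | star e ihe =>
      have := ddag_eseq_le (dgam e g h) (.star e)
      simp [dgam, ddag] at *; omega
  | par | dagger => unfold dgam; split <;> simp [ddag]
  | _ => simp [dgam, ddag]

theorem ddag_le_of_dgam_not_cong_zero {e g h : SPR A} (hne : ¬ cong (dgam e g h) .zero) :
    ddag g ≤ ddag e ∧ ddag h ≤ ddag e := by
  induction e with
  | add e f ihe ihf =>
      simp only [dgam, add_cong_zero_iff, not_and_or] at hne
      rcases hne with hne | hne
      · have := ihe hne; simp only [ddag]; omega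
      · have := ihf hne; simp only [ddag]; omega
  | seq e f ihe ihf =>
      simp only [dgam, add_cong_zero_iff, not_and_or] at hne
      rcases hne with hne | hne
      · have := ihe fun h₀ => hne (eseq_cong_zero h₀ f)
        simp only [ddag]; omega
      · have := ihf fun h₀ => hne (estar_cong_zero e h₀)
        simp only [ddag]; omega
  | star e ihe => exact ihe fun h₀ => hne (eseq_cong_zero h₀ _)
  | par e f =>
      by_cases hc : cong g e ∧ cong h f
      · simp only [hc.1.ddag_eq, hc.2.ddag_eq, ddag]; omega
      · exact absurd (by simpa [dgam, hc] using cong.refl _) hne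
  | dagger e =>
      by_cases hc : cong g e ∧ cong h (.dagger e)
      · simp only [hc.1.ddag_eq, hc.2.ddag_eq, ddag]; omega
      · exact absurd (by simpa [dgam, hc] using cong.refl _) hne
  | _ => exact absurd (.refl _) hne

theorem dleq.ddag_le {e f : SPR A} (h : dleq e f) : ddag e ≤ ddag f := by
  induction h with
  | refl => exact le_rfl
  | trans _ _ ih₁ ih₂ => exact ih₁.trans ih₂
  | congr hc => exact hc.ddag_eq.le
  | delta e a => exact ddag_dseq_le e a
  | gamma e g h => exact ddag_dgam_le e g h
  | forkL hne => exact (ddag_le_of_dgam_not_cong_zero hne).1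
  | forkR hne => exact (ddag_le_of_dgam_not_cong_zero hne).2

theorem cong_of_dgam_dagger_not_cong_zero {f g h : SPR A}
    (hne : ¬ cong (dgam (.dagger f) g h) .zero) : cong g f ∧ cong h (.dagger f) := by
  by_contra hc
  exact hne (by simpa [dgam, hc] using cong.refl _)

theorem dleq.cong_dagger_or_ddag_le {e e' f : SPR A} (h : dleq e e') :
    cong e' (.dagger f) ∨ ddag e' ≤ ddag f → cong e (.dagger f) ∨ ddag e ≤ ddag f := by
  induction h with
  | refl => exact id
  | trans _ _ ih₁ ih₂ => exact ih₁ ∘ ih₂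
  | congr hc => exact Or.imp hc.trans fun hle => hc.ddag_eq ▸ hle
  | delta e a =>
      rintro (hc | hle)
      · simp [((isDerivative_dseq a).congr hc).ddag_eq, dseq, ddag]
      · exact .inr ((ddag_dseq_le e a).trans hle)
  | gamma e g h =>
      rintro (hc | hle)
      · refine .inr ?_
        rw [((isDerivative_dgam g h).congr hc).ddag_eq]
        unfold dgam; split <;> simp [ddag]
      · exact .inr ((ddag_dgam_le e g h).trans hle)
  | forkL hne =>
      rintro (hc | hle)
      · have hne' := fun h₀ => hne (((isDerivative_dgam _ _).congr hc).trans h₀)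
        exact .inr (cong_of_dgam_dagger_not_cong_zero hne').1.ddag_eq.le
      · exact .inr ((ddag_le_of_dgam_not_cong_zero hne).1.trans hle)
  | forkR hne =>
      rintro (hc | hle)
      · have hne' := fun h₀ => hne (((isDerivative_dgam _ _).congr hc).trans h₀)
        exact .inl (cong_of_dgam_dagger_not_cong_zero hne').2
      · exact .inr ((ddag_le_of_dgam_not_cong_zero hne).2.trans hle)

end DaggerLoops

/-- Loops through a parallel star in the trace dependency preorder are trivial. -/
theorem dagger_loops {A : Type} {e f : SPR A}
    (h1 : dleq e (SPR.dagger f)) (h2 : dleq (SPR.dagger f) e) :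
    cong e (SPR.dagger f) :=
  (h1.cong_dagger_or_ddag_le (.inl (.refl _))).resolve_right fun hle =>
    Nat.not_succ_le_self _ (h2.ddag_le.trans hle)
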